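/- Let f(u) = u + ∑_{k≥1} f_k u^{k+1} be the exponential of the formal group law F_b(u₁,u₂) = u₁c(u₂)+u₂c(u₁)-a u₁u₂ - ((d(u₁)-d(u₂))/(u₁c(u₂)-u₂c(u₁)))·u₁²u₂² over a graded Q-algebra, where c(u) = 1 + ∑_{j≥2}c_ju^j and d(u) = ∑_{k≥1}d_ku^k. Then modulo decomposable elements (products of positive-degree generators): 2f₁ ≡ -a, 3f₂ ≡ c₂, 4f₃ ≡ c₃, 6f₃ ≡ -d₁, 5f₄ ≡ c₄, 10f₄ ≡ -d₂, and f_k ≡ 0 (decomposable) for k ≥ 5. -/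

import Mathlib

/-
Work modulo `J²`, `J` the augmentation ideal. In `A/J²` the ideal `K = J/J²` squares to zero and
contains `a` and all coefficients of `f - u`, `c - 1`, `d`, so every composition is linear in
them: `c(f(u)) = c(u)`, `d(f(u)) = d(u)`, and the cleared exponential identity collapses to
`W·(u₁ - u₂) + (d(u₁) - d(u₂))·u₁²u₂² = 0`, where `W` is the linear part of
`f(u₁+u₂) - F_b(f(u₁), f(u₂))` without its `d`-term. Comparing the coefficients of `u₁²u₂`,
`u₁^{k+3}u₂`, `u₁^{k+3}u₂²` and `u₁³u₂^{k+4}` gives the relations; the last one reads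
`(C(n,3) - C(n,2))·f_{n-1} = 0` with `n = k + 6`, where `C(n,3) - C(n,2)` is a positive
integer, hence invertible over `ℚ`.
-/

open MvPowerSeries

/-- Substitution of a multivariate power series `g` (with zero constant term) into a
one-variable power series `f`: `psCompMv f g = f(g)`. -/
noncomputable def psCompMv {A : Type*} [CommSemiring A] {σ : Type*}
    (f : PowerSeries A) (g : MvPowerSeries σ A) : MvPowerSeries σ A :=
  fun m => ∑ k ∈ Finset.range (Finsupp.sum m (fun _ e => e) + 1),
    PowerSeries.coeff (R := A) k f * MvPowerSeries.coeff (R := A) m (g ^ k)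

section Composition

variable {B : Type*} [CommSemiring B] {σ : Type*}

theorem coeff_psCompMv (f : PowerSeries B) (g : MvPowerSeries σ B) (m : σ →₀ ℕ) :
    coeff m (psCompMv f g) =
      ∑ k ∈ Finset.range (m.degree + 1), PowerSeries.coeff k f * coeff m (g ^ k) :=
  rfl

theorem map_psCompMv {C : Type*} [CommSemiring C] (π : B →+* C) (f : PowerSeries B)
    (g : MvPowerSeries σ B) :
    map π (psCompMv f g) = psCompMv (PowerSeries.map π f) (map π g) := by
  ext m
  simp [coeff_psCompMv, ← map_pow]

theorem psCompMv_add (f f' : PowerSeries B) (g : MvPowerSeries σ B) :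
    psCompMv (f + f') g = psCompMv f g + psCompMv f' g := by
  ext m
  simp [coeff_psCompMv, add_mul, Finset.sum_add_distrib]

theorem psCompMv_one (g : MvPowerSeries σ B) : psCompMv (1 : PowerSeries B) g = 1 := by
  ext m
  simp [coeff_psCompMv, PowerSeries.coeff_one]

theorem psCompMv_X {g : MvPowerSeries σ B} (hg : constantCoeff g = 0) :
    psCompMv PowerSeries.X g = g := by
  ext m
  rcases eq_or_ne m 0 with rfl | hm <;>
    simp [coeff_psCompMv, PowerSeries.coeff_X, Finsupp.degree_eq_zero_iff, *]

theorem psCompMv_X_add (φ : PowerSeries B) {g : MvPowerSeries σ B} (hg : constantCoeff g = 0) :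
    psCompMv (PowerSeries.X + φ) g = g + psCompMv φ g := by
  rw [psCompMv_add, psCompMv_X hg]

theorem psCompMv_one_add (γ : PowerSeries B) (g : MvPowerSeries σ B) :
    psCompMv (1 + γ) g = 1 + psCompMv γ g := by
  rw [psCompMv_add, psCompMv_one]

end Composition

section SquareZero

variable {B : Type*} [CommRing B] {σ : Type*} {K : Ideal B}

variable (σ) in
def coeffIdeal (K : Ideal B) : Ideal (MvPowerSeries σ B) where
  carrier := {s | ∀ m, coeff m s ∈ K}
  add_mem' hs ht m := by simpa using K.add_mem (hs m) (ht m)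
  zero_mem' m := by simp
  smul_mem' t s hs m := by
    classical
    rw [smul_eq_mul, coeff_mul]
    exact K.sum_mem fun _ _ => K.mul_mem_left _ (hs _)

theorem C_mem_coeffIdeal {a : B} (ha : a ∈ K) : C a ∈ coeffIdeal σ K := fun m => by
  classical
  rw [coeff_C]
  split_ifs
  exacts [ha, K.zero_mem]

theorem mul_eq_zero_of_mem_coeffIdeal (hK : K * K = ⊥) {s t : MvPowerSeries σ B}
    (hs : s ∈ coeffIdeal σ K) (ht : t ∈ coeffIdeal σ K) : s * t = 0 := by
  classical
  ext m
  rw [coeff_mul, map_zero]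
  refine Finset.sum_eq_zero fun p _ => ?_
  simpa [hK] using Ideal.mul_mem_mul (hs p.1) (ht p.2)

theorem psCompMv_mem_coeffIdeal {f : PowerSeries B} (hf : ∀ k, PowerSeries.coeff k f ∈ K)
    (g : MvPowerSeries σ B) : psCompMv f g ∈ coeffIdeal σ K := fun m => by
  rw [coeff_psCompMv]
  exact K.sum_mem fun k _ => K.mul_mem_right _ (hf k)

theorem psCompMv_eq_of_sub_mem (hK : K * K = ⊥) {f : PowerSeries B}
    (hf : ∀ k, PowerSeries.coeff k f ∈ K) {g g' : MvPowerSeries σ B}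
    (hg : g - g' ∈ coeffIdeal σ K) : psCompMv f g = psCompMv f g' := by
  ext m
  rw [coeff_psCompMv, coeff_psCompMv]
  refine Finset.sum_congr rfl fun k _ => ?_
  have hpow : g ^ k - g' ^ k ∈ coeffIdeal σ K :=
    Ideal.mem_of_dvd _ (sub_dvd_pow_sub_pow g g' k) hg
  have hzero := Ideal.mul_mem_mul (hf k) (hpow m)
  rwa [hK, Ideal.mem_bot, map_sub, mul_sub, sub_eq_zero] at hzero

theorem psCompMv_psCompMv_X_add_eq (hK : K * K = ⊥) {p φ : PowerSeries B}
    (hp : ∀ k, PowerSeries.coeff k p ∈ K) (hφ : ∀ k, PowerSeries.coeff k φ ∈ K)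
    {g : MvPowerSeries σ B} (hg : constantCoeff g = 0) :
    psCompMv p (psCompMv (PowerSeries.X + φ) g) = psCompMv p g := by
  refine psCompMv_eq_of_sub_mem hK hp ?_
  rw [psCompMv_X_add φ hg, add_sub_cancel_left]
  exact psCompMv_mem_coeffIdeal hφ g

theorem coeff_map_mem_map {J : Ideal B} {C : Type*} [CommRing C] (π : B →+* C)
    {p : PowerSeries B} (hp : ∀ n, PowerSeries.coeff n p ∈ J) (n : ℕ) :
    PowerSeries.coeff n (p.map π) ∈ J.map π := by
  rw [PowerSeries.coeff_map]
  exact Ideal.mem_map_of_mem π (hp n)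

end SquareZero

section TwoVariables

noncomputable def mon (x y : ℕ) : Fin 2 →₀ ℕ := Finsupp.single 0 x + Finsupp.single 1 y

theorem mon_eq_mon_iff {x y x' y' : ℕ} : mon x y = mon x' y' ↔ x = x' ∧ y = y' := by
  simp [mon, Finsupp.ext_iff, Fin.forall_fin_two]

theorem mon_le_mon_iff {x y x' y' : ℕ} : mon x y ≤ mon x' y' ↔ x ≤ x' ∧ y ≤ y' := by
  simp [mon, Finsupp.le_def, Fin.forall_fin_two]

theorem mon_add (x y i j : ℕ) : mon (x + i) (y + j) = mon x y + mon i j := by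
  simp [mon, Finsupp.ext_iff, Fin.forall_fin_two]

theorem degree_mon (x y : ℕ) : (mon x y).degree = x + y := by
  simp [mon]

variable {B : Type*} [CommSemiring B]

theorem X_zero_eq : (X 0 : MvPowerSeries (Fin 2) B) = monomial (mon 1 0) 1 := by
  simp [mon, X_def]

theorem X_one_eq : (X 1 : MvPowerSeries (Fin 2) B) = monomial (mon 0 1) 1 := by
  simp [mon, X_def]

theorem X_zero_pow (k : ℕ) : (X 0 : MvPowerSeries (Fin 2) B) ^ k = monomial (mon k 0) 1 := by
  simp [mon, X_pow_eq]

theorem X_one_pow (k : ℕ) : (X 1 : MvPowerSeries (Fin 2) B) ^ k = monomial (mon 0 k) 1 := by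
  simp [mon, X_pow_eq]

theorem coeff_mon_add_mul_monomial (s : MvPowerSeries (Fin 2) B) (x y i j : ℕ) (b : B) :
    coeff (mon (x + i) (y + j)) (s * monomial (mon i j) b) = coeff (mon x y) s * b := by
  rw [mon_add, coeff_add_mul_monomial]

theorem coeff_mon_mul_monomial_of_lt (s : MvPowerSeries (Fin 2) B) {x y i j : ℕ}
    (h : x < i ∨ y < j) (b : B) : coeff (mon x y) (s * monomial (mon i j) b) = 0 := by
  rw [coeff_mul_monomial, if_neg (by rw [mon_le_mon_iff]; omega)]

theorem coeff_mon_succ_mul_X_zero (s : MvPowerSeries (Fin 2) B) (x y : ℕ) :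
    coeff (mon (x + 1) y) (s * X 0) = coeff (mon x y) s := by
  rw [X_zero_eq]
  exact (coeff_mon_add_mul_monomial s x y 1 0 1).trans (mul_one _)

theorem coeff_mon_succ_mul_X_one (s : MvPowerSeries (Fin 2) B) (x y : ℕ) :
    coeff (mon x (y + 1)) (s * X 1) = coeff (mon x y) s := by
  rw [X_one_eq]
  exact (coeff_mon_add_mul_monomial s x y 0 1 1).trans (mul_one _)

theorem coeff_mon_zero_mul_X_one (s : MvPowerSeries (Fin 2) B) (x : ℕ) :
    coeff (mon x 0) (s * X 1) = 0 := by
  rw [X_one_eq, coeff_mon_mul_monomial_of_lt s (.inr zero_lt_one)]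

theorem coeff_mon_add_two_mul_X_sq_mul_X_sq (s : MvPowerSeries (Fin 2) B) (x y : ℕ) :
    coeff (mon (x + 2) (y + 2)) (s * (X 0 ^ 2 * X 1 ^ 2)) = coeff (mon x y) s := by
  simpa [X_zero_pow, X_one_pow, monomial_mul_monomial, ← mon_add] using
    coeff_mon_add_mul_monomial s x y 2 2 1

theorem coeff_mon_mul_X_sq_mul_X_sq_of_lt (s : MvPowerSeries (Fin 2) B) {x y : ℕ}
    (h : x < 2 ∨ y < 2) : coeff (mon x y) (s * (X 0 ^ 2 * X 1 ^ 2)) = 0 := by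
  simpa [X_zero_pow, X_one_pow, monomial_mul_monomial, ← mon_add] using
    coeff_mon_mul_monomial_of_lt s h 1

theorem coeff_mon_C_mul_X_zero_mul_X_one (a : B) (x y : ℕ) :
    coeff (mon x y) (C a * (X 0 * X 1)) = if x = 1 ∧ y = 1 then a else 0 := by
  rw [X_def, X_def, monomial_mul_monomial, ← monomial_zero_eq_C_apply, monomial_mul_monomial]
  simp [coeff_monomial, mon, Finsupp.ext_iff, Fin.forall_fin_two, eq_comm]

theorem coeff_mon_psCompMv_X_zero (p : PowerSeries B) (x y : ℕ) :
    coeff (mon x y) (psCompMv p (X 0)) = if y = 0 then PowerSeries.coeff x p else 0 := by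
  rcases eq_or_ne y 0 with rfl | hy <;>
    simp [coeff_psCompMv, X_zero_pow, coeff_monomial, mon_eq_mon_iff, degree_mon, *]

theorem coeff_mon_psCompMv_X_one (p : PowerSeries B) (x y : ℕ) :
    coeff (mon x y) (psCompMv p (X 1)) = if x = 0 then PowerSeries.coeff y p else 0 := by
  rcases eq_or_ne x 0 with rfl | hx <;>
    simp [coeff_psCompMv, X_one_pow, coeff_monomial, mon_eq_mon_iff, degree_mon, *]

theorem coeff_mon_X_add_X_pow (x y k : ℕ) :
    coeff (mon x y) ((X 0 + X 1 : MvPowerSeries (Fin 2) B) ^ k) =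
      if x + y = k then (k.choose x : B) else 0 := by
  simp only [add_pow, X_zero_pow, X_one_pow, monomial_mul_monomial, ← mon_add, mul_one,
    mul_comm _ (Nat.cast _), ← nsmul_eq_mul, map_sum, map_nsmul, coeff_monomial, mon_eq_mon_iff]
  split_ifs with h
  · rw [Finset.sum_eq_single x (fun j _ hj => by simp; omega) (fun hx => by simp at hx; omega)]
    simp [← h]
  · exact Finset.sum_eq_zero fun j hj => by simp at hj ⊢; omega

theorem coeff_mon_psCompMv_X_add_X (p : PowerSeries B) (x y : ℕ) :
    coeff (mon x y) (psCompMv p (X 0 + X 1)) =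
      ((x + y).choose x : B) * PowerSeries.coeff (x + y) p := by
  simp [coeff_psCompMv, coeff_mon_X_add_X_pow, degree_mon, mul_comm]

end TwoVariables

section FirstOrder

variable {B : Type*} [CommRing B]

/-- The exponential identity `f(u₁+u₂) = F_b(f(u₁), f(u₂))`, multiplied by the denominator
`f(u₁)c(f(u₂)) - f(u₂)c(f(u₁))` of `F_b`. -/
def ClearedExpEquation (a : B) (f c d : PowerSeries B) : Prop :=
  psCompMv f (X 0 + X 1) *
      (psCompMv f (X 0) * psCompMv c (psCompMv f (X 1))
        - psCompMv f (X 1) * psCompMv c (psCompMv f (X 0)))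
    = (psCompMv f (X 0) * psCompMv c (psCompMv f (X 1))
        + psCompMv f (X 1) * psCompMv c (psCompMv f (X 0))
        - C (σ := Fin 2) a * (psCompMv f (X 0) * psCompMv f (X 1))) *
        (psCompMv f (X 0) * psCompMv c (psCompMv f (X 1))
          - psCompMv f (X 1) * psCompMv c (psCompMv f (X 0)))
      - (psCompMv d (psCompMv f (X 0)) - psCompMv d (psCompMv f (X 1))) *
          (psCompMv f (X 0) ^ 2 * psCompMv f (X 1) ^ 2)

theorem ClearedExpEquation.map {C' : Type*} [CommRing C'] (π : B →+* C') {a : B}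
    {f c d : PowerSeries B} (h : ClearedExpEquation a f c d) :
    ClearedExpEquation (π a) (f.map π) (c.map π) (d.map π) := by
  simpa only [ClearedExpEquation, map_mul, map_sub, map_add, map_pow, map_psCompMv, map_X, map_C]
    using congrArg (MvPowerSeries.map π) h

/-- For `f = u + φ` and `c = 1 + γ`, the part of `f(u₁+u₂) - F_b(f(u₁), f(u₂))` that is linear
in `a, φ, γ`, apart from the `d`-term. -/
noncomputable def linearDefect (a : B) (φ γ : PowerSeries B) : MvPowerSeries (Fin 2) B :=
  psCompMv φ (X 0 + X 1) - psCompMv φ (X 0) - psCompMv φ (X 1)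
    - psCompMv γ (X 1) * X 0 - psCompMv γ (X 0) * X 1 + C a * (X 0 * X 1)

theorem coeff_linearDefect_succ_succ (a : B) (φ γ : PowerSeries B) (x y : ℕ) :
    coeff (mon (x + 1) (y + 1)) (linearDefect a φ γ) =
      ((x + y + 2).choose (x + 1) : B) * PowerSeries.coeff (x + y + 2) φ
        - (if x = 0 then PowerSeries.coeff (y + 1) γ else 0)
        - (if y = 0 then PowerSeries.coeff (x + 1) γ else 0)
        + (if x = 0 ∧ y = 0 then a else 0) := by
  simp only [linearDefect, map_add, map_sub, coeff_mon_succ_mul_X_zero, coeff_mon_succ_mul_X_one,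
    coeff_mon_psCompMv_X_zero, coeff_mon_psCompMv_X_one, coeff_mon_psCompMv_X_add_X,
    coeff_mon_C_mul_X_zero_mul_X_one, show x + 1 + (y + 1) = x + y + 2 by ring]
  simp

theorem coeff_linearDefect_succ_zero (a : B) (φ : PowerSeries B) {γ : PowerSeries B}
    (hγ : PowerSeries.coeff 0 γ = 0) (x : ℕ) :
    coeff (mon (x + 1) 0) (linearDefect a φ γ) = 0 := by
  simp [linearDefect, coeff_mon_succ_mul_X_zero, coeff_mon_zero_mul_X_one,
    coeff_mon_psCompMv_X_zero, coeff_mon_psCompMv_X_one, coeff_mon_psCompMv_X_add_X, hγ]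

theorem linearDefect_mem_coeffIdeal {K : Ideal B} {a : B} (ha : a ∈ K) {φ γ : PowerSeries B}
    (hφ : ∀ n, PowerSeries.coeff n φ ∈ K) (hγ : ∀ n, PowerSeries.coeff n γ ∈ K) :
    linearDefect a φ γ ∈ coeffIdeal (Fin 2) K := by
  have hφ' := psCompMv_mem_coeffIdeal (σ := Fin 2) hφ
  have hγ' := psCompMv_mem_coeffIdeal (σ := Fin 2) hγ
  exact add_mem (sub_mem (sub_mem (sub_mem (sub_mem (hφ' _) (hφ' _)) (hφ' _))
    (Ideal.mul_mem_right _ _ (hγ' _))) (Ideal.mul_mem_right _ _ (hγ' _)))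
    (Ideal.mul_mem_right _ _ (C_mem_coeffIdeal ha))

def LinearizedExpEquation (a : B) (φ γ δ : PowerSeries B) : Prop :=
  linearDefect a φ γ * (X 0 - X 1)
    + (psCompMv δ (X 0) - psCompMv δ (X 1)) * (X 0 ^ 2 * X 1 ^ 2) = 0

theorem ClearedExpEquation.linearized {K : Ideal B} (hK : K * K = ⊥) {a : B} (ha : a ∈ K)
    {φ γ δ : PowerSeries B} (hφ : ∀ n, PowerSeries.coeff n φ ∈ K)
    (hγ : ∀ n, PowerSeries.coeff n γ ∈ K) (hδ : ∀ n, PowerSeries.coeff n δ ∈ K)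
    (h : ClearedExpEquation a (PowerSeries.X + φ) (1 + γ) δ) :
    LinearizedExpEquation a φ γ δ := by
  set 𝔎 := coeffIdeal (Fin 2) K
  have hsq : ∀ s ∈ 𝔎, ∀ t ∈ 𝔎, s * t = 0 := fun _ hs _ ht =>
    mul_eq_zero_of_mem_coeffIdeal hK hs ht
  have hc : ∀ i : Fin 2,
      psCompMv (1 + γ) (psCompMv (PowerSeries.X + φ) (X i)) = 1 + psCompMv γ (X i) := fun i => by
    rw [psCompMv_one_add, psCompMv_psCompMv_X_add_eq hK hγ hφ (constantCoeff_X i)]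
  have hd : ∀ i : Fin 2, psCompMv δ (psCompMv (PowerSeries.X + φ) (X i)) = psCompMv δ (X i) :=
    fun i => psCompMv_psCompMv_X_add_eq hK hδ hφ (constantCoeff_X i)
  rw [ClearedExpEquation, hc, hc, hd, hd, psCompMv_X_add φ (constantCoeff_X 0),
    psCompMv_X_add φ (constantCoeff_X 1), psCompMv_X_add φ (by simp)] at h
  set p₀ := psCompMv φ (X 0 : MvPowerSeries (Fin 2) B)
  set p₁ := psCompMv φ (X 1 : MvPowerSeries (Fin 2) B)
  set q₀ := psCompMv γ (X 0 : MvPowerSeries (Fin 2) B)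
  set q₁ := psCompMv γ (X 1 : MvPowerSeries (Fin 2) B)
  set r := psCompMv δ (X 0 : MvPowerSeries (Fin 2) B) - psCompMv δ (X 1)
  set N := (X 0 + p₀) * (1 + q₁) - (X 1 + p₁) * (1 + q₀)
  set M := (X 0 + p₀) ^ 2 * (X 1 + p₁) ^ 2
  have hp₀ : p₀ ∈ 𝔎 := psCompMv_mem_coeffIdeal hφ _
  have hp₁ : p₁ ∈ 𝔎 := psCompMv_mem_coeffIdeal hφ _
  have hq₀ : q₀ ∈ 𝔎 := psCompMv_mem_coeffIdeal hγ _
  have hq₁ : q₁ ∈ 𝔎 := psCompMv_mem_coeffIdeal hγ _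
  have hr : r ∈ 𝔎 := sub_mem (psCompMv_mem_coeffIdeal hδ _) (psCompMv_mem_coeffIdeal hδ _)
  have hCa : C a ∈ 𝔎 := C_mem_coeffIdeal ha
  have hW := linearDefect_mem_coeffIdeal ha hφ hγ
  have hN : N - (X 0 - X 1) ∈ 𝔎 := by
    rw [← Ideal.Quotient.eq]
    simp [N, Ideal.Quotient.eq_zero_iff_mem.mpr, hp₀, hp₁, hq₀, hq₁]
  have hM : M - X 0 ^ 2 * X 1 ^ 2 ∈ 𝔎 := by
    rw [← Ideal.Quotient.eq]
    simp [M, Ideal.Quotient.eq_zero_iff_mem.mpr, hp₀, hp₁]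
  unfold linearDefect at hW
  unfold LinearizedExpEquation linearDefect
  -- every term dropped from `h` is a product of two series with coefficients in `K`
  linear_combination h - hsq _ hW _ hN - hsq _ hr _ hM
    + N * (hsq _ hp₀ _ hq₁ + hsq _ hp₁ _ hq₀ - X 1 * hsq _ hCa _ hp₀ - X 0 * hsq _ hCa _ hp₁
      - p₁ * hsq _ hCa _ hp₀)

end FirstOrder

section CoefficientRelations

variable {B : Type*} [CommRing B] {a : B} {φ γ δ : PowerSeries B}

theorem LinearizedExpEquation.coeff_sub_coeff (hL : LinearizedExpEquation a φ γ δ) (x y : ℕ) :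
    coeff (mon x (y + 1)) (linearDefect a φ γ) - coeff (mon (x + 1) y) (linearDefect a φ γ)
      + coeff (mon (x + 1) (y + 1))
          ((psCompMv δ (X 0) - psCompMv δ (X 1)) * (X 0 ^ 2 * X 1 ^ 2)) = 0 := by
  have h := congrArg (coeff (mon (x + 1) (y + 1))) hL
  rwa [map_add, mul_sub, map_sub, coeff_mon_succ_mul_X_zero, coeff_mon_succ_mul_X_one,
    map_zero] at h

theorem LinearizedExpEquation.two_mul_coeff_two_add_eq_zero (hL : LinearizedExpEquation a φ γ δ)
    (hγ₀ : PowerSeries.coeff 0 γ = 0) (hγ₁ : PowerSeries.coeff 1 γ = 0) :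
    2 * PowerSeries.coeff 2 φ + a = 0 := by
  have h := hL.coeff_sub_coeff 1 0
  have hW₁₁ := coeff_linearDefect_succ_succ a φ γ 0 0
  have hW₂₀ := coeff_linearDefect_succ_zero a φ hγ₀ 1
  have hR := coeff_mon_mul_X_sq_mul_X_sq_of_lt (psCompMv δ (X 0) - psCompMv δ (X 1))
    (x := 1 + 1) (y := 0 + 1) (by omega)
  norm_num [hγ₁] at hW₁₁
  linear_combination h - hW₁₁ + hW₂₀ - hR

theorem LinearizedExpEquation.natCast_mul_coeff_add_three_eq
    (hL : LinearizedExpEquation a φ γ δ) (hγ₀ : PowerSeries.coeff 0 γ = 0) (k : ℕ) :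
    ((k + 3 : ℕ) : B) * PowerSeries.coeff (k + 3) φ = PowerSeries.coeff (k + 2) γ := by
  have h := hL.coeff_sub_coeff (k + 2) 0
  have hW₁ := coeff_linearDefect_succ_succ a φ γ (k + 1) 0
  have hW₀ := coeff_linearDefect_succ_zero a φ hγ₀ (k + 2)
  have hR := coeff_mon_mul_X_sq_mul_X_sq_of_lt (psCompMv δ (X 0) - psCompMv δ (X 1))
    (x := k + 2 + 1) (y := 0 + 1) (by omega)
  norm_num [Nat.choose_succ_self_right] at hW₁
  push_cast
  linear_combination h - hW₁ + hW₀ - hR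

theorem LinearizedExpEquation.choose_two_mul_coeff_add_four_add_coeff_eq_zero
    (hL : LinearizedExpEquation a φ γ δ) (hγ₀ : PowerSeries.coeff 0 γ = 0) (k : ℕ) :
    ((k + 4).choose 2 : B) * PowerSeries.coeff (k + 4) φ + PowerSeries.coeff (k + 1) δ = 0 := by
  have h := hL.coeff_sub_coeff (k + 2) 1
  have hW₂ := coeff_linearDefect_succ_succ a φ γ (k + 1) 1
  have hW₁ := coeff_linearDefect_succ_succ a φ γ (k + 2) 0
  have hR := coeff_mon_add_two_mul_X_sq_mul_X_sq (psCompMv δ (X 0) - psCompMv δ (X 1)) (k + 1) 0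
  have hγ := hL.natCast_mul_coeff_add_three_eq hγ₀ (k + 1)
  rw [Nat.choose_symm_add] at hW₂
  norm_num [Nat.choose_succ_self_right, coeff_mon_psCompMv_X_zero, coeff_mon_psCompMv_X_one,
    add_assoc] at h hW₂ hW₁ hR hγ
  linear_combination h - hW₂ + hW₁ - hR + hγ

theorem LinearizedExpEquation.coeff_add_six_eq_zero [Algebra ℚ B]
    (hL : LinearizedExpEquation a φ γ δ) (k : ℕ) : PowerSeries.coeff (k + 6) φ = 0 := by
  have h := hL.coeff_sub_coeff 2 (k + 3)
  have hW₂ := coeff_linearDefect_succ_succ a φ γ 1 (k + 3)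
  have hW₃ := coeff_linearDefect_succ_succ a φ γ 2 (k + 2)
  have hR := coeff_mon_add_two_mul_X_sq_mul_X_sq (psCompMv δ (X 0) - psCompMv δ (X 1)) 1 (k + 2)
  norm_num [coeff_mon_psCompMv_X_zero, coeff_mon_psCompMv_X_one, add_assoc] at h hW₂ hW₃ hR
  rw [show 1 + (k + 5) = k + 6 by omega] at hW₂
  rw [show 2 + (k + 4) = k + 6 by omega] at hW₃
  -- `h` now reads `(C(k+6, 2) - C(k+6, 3)) φ_{k+6} = 0`; note `3 C(n,3) = (n-2) C(n,2)`
  have hlt : (k + 6).choose 2 < (k + 6).choose 3 := by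
    have h₃ := Nat.choose_succ_right_eq (k + 6) 2
    have h₂ := Nat.choose_pos (show 2 ≤ k + 6 by omega)
    rw [show k + 6 - 2 = k + 4 by omega] at h₃
    nlinarith
  obtain ⟨m, hm⟩ := Nat.exists_eq_add_of_lt hlt
  have hu : IsUnit ((m + 1 : ℕ) : B) := by
    simpa using (IsUnit.mk0 ((m + 1 : ℕ) : ℚ) (by positivity)).map (algebraMap ℚ B)
  refine hu.mul_right_eq_zero.mp ?_
  rw [hm] at hW₃
  push_cast at hW₃ ⊢
  linear_combination -h + hW₂ - hW₃ + hR

end CoefficientRelations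

theorem ClearedExpEquation.relations_mod_sq {A : Type*} [CommRing A] [Algebra ℚ A] {J : Ideal A}
    {a : A} {f c d : PowerSeries A} (h : ClearedExpEquation a f c d) (ha : a ∈ J)
    (hf : ∀ n, PowerSeries.coeff n (f - PowerSeries.X) ∈ J)
    (hc : ∀ n, PowerSeries.coeff n (c - 1) ∈ J) (hd : ∀ n, PowerSeries.coeff n d ∈ J)
    (hc₀ : PowerSeries.coeff 0 c = 1) (hc₁ : PowerSeries.coeff 1 c = 0) :
    2 * PowerSeries.coeff 2 f + a ∈ J * J ∧
    (∀ k, ((k + 3 : ℕ) : A) * PowerSeries.coeff (k + 3) f - PowerSeries.coeff (k + 2) c ∈ J * J) ∧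
    (∀ k, ((k + 4).choose 2 : A) * PowerSeries.coeff (k + 4) f + PowerSeries.coeff (k + 1) d
      ∈ J * J) ∧
    ∀ k, PowerSeries.coeff (k + 6) f ∈ J * J := by
  set π := Ideal.Quotient.mk (J * J)
  have hK : J.map π * J.map π = ⊥ := by rw [← Ideal.map_mul, Ideal.map_quotient_self]
  have hE := h.map π
  rw [show f.map π = PowerSeries.X + (f - PowerSeries.X).map π by simp,
    show c.map π = 1 + (c - 1).map π by simp] at hE
  have hL := hE.linearized hK (Ideal.mem_map_of_mem π ha)
    (coeff_map_mem_map π hf) (coeff_map_mem_map π hc) (coeff_map_mem_map π hd)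
  have hγ₀ : PowerSeries.coeff 0 ((c - 1).map π) = 0 := by
    rw [PowerSeries.coeff_map, map_sub, hc₀, PowerSeries.coeff_zero_one, sub_self, map_zero]
  have hγ₁ : PowerSeries.coeff 1 ((c - 1).map π) = 0 := by simp [hc₁]
  simp only [← Ideal.Quotient.eq_zero_iff_mem, map_add, map_sub, map_mul, map_ofNat, map_natCast]
  refine ⟨?_, fun k => ?_, fun k => ?_, fun k => ?_⟩
  · simpa [PowerSeries.coeff_X] using hL.two_mul_coeff_two_add_eq_zero hγ₀ hγ₁
  · simpa [PowerSeries.coeff_X, sub_eq_zero] using hL.natCast_mul_coeff_add_three_eq hγ₀ k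
  · simpa [PowerSeries.coeff_X] using hL.choose_two_mul_coeff_add_four_add_coeff_eq_zero hγ₀ k
  · simpa [PowerSeries.coeff_X] using hL.coeff_add_six_eq_zero k

/-- Let `f(u) = u + ∑_{k≥1} f_k u^{k+1}` be the exponential of the Buchstaber–Krichever
formal group law
`F_b(u₁,u₂) = u₁c(u₂) + u₂c(u₁) - a·u₁u₂ - ((d(u₁)-d(u₂))/(u₁c(u₂)-u₂c(u₁)))·u₁²u₂²`,
where `c(u) = 1 + ∑_{j≥2} c_j u^j` and `d(u) = ∑_{k≥1} d_k u^k`, over an augmented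
`ℚ`-algebra `(A, ε)` whose generators `a, c_j, d_k, f_k` of positive degree lie in the
augmentation ideal `J = ker ε`. Then modulo decomposables (the ideal `J·J`):
`2f₁ ≡ -a`, `3f₂ ≡ c₂`, `4f₃ ≡ c₃`, `6f₃ ≡ -d₁`, `5f₄ ≡ c₄`, `10f₄ ≡ -d₂`, and `f_k ≡ 0`
for `k ≥ 5`. (The exponential identity `f(u₁+u₂) = F_b(f(u₁),f(u₂))` is stated in the
cleared form, multiplied by `f(u₁)c(f(u₂)) - f(u₂)c(f(u₁))`.) -/
theorem stmt_17 {A : Type*} [CommRing A] [Algebra ℚ A] (ε : A →ₐ[ℚ] ℚ)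
    (a : A) (c d fc : ℕ → A)
    (ha : a ∈ RingHom.ker (ε : A →+* ℚ))
    (hcJ : ∀ j, c j ∈ RingHom.ker (ε : A →+* ℚ))
    (hdJ : ∀ k, d k ∈ RingHom.ker (ε : A →+* ℚ))
    (hfJ : ∀ k, fc k ∈ RingHom.ker (ε : A →+* ℚ))
    -- the series f, c, d
    (fS cS dS : PowerSeries A)
    (hfS : fS = PowerSeries.mk fun n => if n = 0 then 0 else if n = 1 then 1 else fc (n - 1))
    (hcS : cS = PowerSeries.mk fun j => if j = 0 then 1 else if j = 1 then 0 else c j)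
    (hdS : dS = PowerSeries.mk fun k => if k = 0 then 0 else d k)
    -- the exponential identity f(u₁+u₂) = F_b(f(u₁), f(u₂)), cleared of denominators
    (hexp : psCompMv fS (X 0 + X 1) *
        (psCompMv fS (X 0) * psCompMv cS (psCompMv fS (X 1))
          - psCompMv fS (X 1) * psCompMv cS (psCompMv fS (X 0)))
      = (psCompMv fS (X 0) * psCompMv cS (psCompMv fS (X 1))
          + psCompMv fS (X 1) * psCompMv cS (psCompMv fS (X 0))
          - MvPowerSeries.C (σ := Fin 2) (R := A) a * (psCompMv fS (X 0) * psCompMv fS (X 1))) *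
          (psCompMv fS (X 0) * psCompMv cS (psCompMv fS (X 1))
            - psCompMv fS (X 1) * psCompMv cS (psCompMv fS (X 0)))
        - (psCompMv dS (psCompMv fS (X 0)) - psCompMv dS (psCompMv fS (X 1))) *
            (psCompMv fS (X 0) ^ 2 * psCompMv fS (X 1) ^ 2)) :
    2 * fc 1 + a ∈ RingHom.ker (ε : A →+* ℚ) * RingHom.ker (ε : A →+* ℚ) ∧
    3 * fc 2 - c 2 ∈ RingHom.ker (ε : A →+* ℚ) * RingHom.ker (ε : A →+* ℚ) ∧
    4 * fc 3 - c 3 ∈ RingHom.ker (ε : A →+* ℚ) * RingHom.ker (ε : A →+* ℚ) ∧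
    6 * fc 3 + d 1 ∈ RingHom.ker (ε : A →+* ℚ) * RingHom.ker (ε : A →+* ℚ) ∧
    5 * fc 4 - c 4 ∈ RingHom.ker (ε : A →+* ℚ) * RingHom.ker (ε : A →+* ℚ) ∧
    10 * fc 4 + d 2 ∈ RingHom.ker (ε : A →+* ℚ) * RingHom.ker (ε : A →+* ℚ) ∧
    ∀ k, 5 ≤ k → fc k ∈ RingHom.ker (ε : A →+* ℚ) * RingHom.ker (ε : A →+* ℚ) := by
  set J := RingHom.ker (ε : A →+* ℚ)
  have hf : ∀ n, PowerSeries.coeff n (fS - PowerSeries.X) ∈ J := by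
    rintro (_ | _ | n) <;> simp [hfS, hfJ, PowerSeries.coeff_X]
  have hc : ∀ n, PowerSeries.coeff n (cS - 1) ∈ J := by
    rintro (_ | _ | n) <;> simp [hcS, hcJ, PowerSeries.coeff_one]
  have hd : ∀ n, PowerSeries.coeff n dS ∈ J := by
    rintro (_ | n) <;> simp [hdS, hdJ]
  obtain ⟨h₁, h₂, h₃, h₄⟩ :=
    ClearedExpEquation.relations_mod_sq hexp ha hf hc hd (by simp [hcS]) (by simp [hcS])
  refine ⟨by simpa [hfS] using h₁, by simpa [hfS, hcS] using h₂ 0, by simpa [hfS, hcS] using h₂ 1,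
    by simpa [hfS, hdS, Nat.choose] using h₃ 0, by simpa [hfS, hcS] using h₂ 2,
    by simpa [hfS, hdS, Nat.choose] using h₃ 1, fun k hk => ?_⟩
  obtain ⟨j, rfl⟩ := Nat.exists_eq_add_of_le' hk
  simpa [hfS] using h₄ j
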